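/- Let I, J be adjacent facets of a subword complex with I∖{i} = J∖{j}. Then the root function of J satisfies r(J,k) = s_{r(I,i)}(r(I,k)) for min(i,j) < k ≤ max(i,j), and r(J,k) = r(I,k) otherwise, where s_β denotes the reflection in the root β. -/

import Mathlib

open scoped RealInnerProductSpace

variable {V : Type*} [NormedAddCommGroup V] [InnerProductSpace ℝ V] [FiniteDimensional ℝ V]

/-- The orthogonal reflection interchanging `v` and `-v` and fixing the hyperplane `v^⊥`
pointwise (reflection through the subspace `(ℝ∙v)ᗮ`). -/
noncomputable def reflAlong (v : V) : V ≃ₗᵢ[ℝ] V :=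
  Submodule.reflection (Submodule.span ℝ {v})ᗮ

/-- A finite (essential) reflection group on a Euclidean vector space, together with a
root system and a generic linear functional selecting the positive roots.  This is the
setting of a finite Coxeter system realized geometrically. -/
structure FiniteRootSystem (V : Type*) [NormedAddCommGroup V] [InnerProductSpace ℝ V]
    [FiniteDimensional ℝ V] where
  /-- The reflection group `W`, a subgroup of the orthogonal group. -/
  W : Subgroup (V ≃ₗᵢ[ℝ] V)
  /-- `W` is finite. -/
  finW : Finite W
  /-- The root system `Φ`. -/
  Φ : Set V
  ne_zero : ∀ β ∈ Φ, β ≠ 0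
  /-- `Φ` is stable under the action of `W`. -/
  stable : ∀ w ∈ W, ∀ β ∈ Φ, w β ∈ Φ
  /-- `Φ` contains two opposite roots orthogonal to each reflection hyperplane. -/
  neg_mem : ∀ β ∈ Φ, -β ∈ Φ
  smul_mem : ∀ β ∈ Φ, ∀ c : ℝ, c • β ∈ Φ → c = 1 ∨ c = -1
  refl_mem : ∀ β ∈ Φ, reflAlong β ∈ W
  refl_surj : ∀ g ∈ W, (∃ v : V, v ≠ 0 ∧ g = reflAlong v) → ∃ β ∈ Φ, g = reflAlong β
  /-- `W` is generated by the reflections along the roots. -/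
  gen : W = Subgroup.closure {g | ∃ β ∈ Φ, g = reflAlong β}
  /-- The intersection of the reflecting hyperplanes is reduced to `0`. -/
  essential : ∀ v : V, (∀ β ∈ Φ, ⟪β, v⟫ = 0) → v = 0
  /-- A linear functional not vanishing on any root, splitting `Φ` into positive and
  negative roots. -/
  f : V →ₗ[ℝ] ℝ
  f_ne : ∀ β ∈ Φ, f β ≠ 0

namespace FiniteRootSystem

variable (R : FiniteRootSystem V)

/-- The positive roots. -/
def PosRoots : Set V := {β ∈ R.Φ | 0 < R.f β}

/-- The negative roots. -/
def NegRoots : Set V := {β ∈ R.Φ | R.f β < 0}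

/-- The cone generated by the positive roots. -/
def InPosCone (v : V) : Prop :=
  ∃ (s : Finset V) (c : V → ℝ), ↑s ⊆ R.PosRoots ∧ (∀ x ∈ s, 0 ≤ c x) ∧
    v = ∑ x ∈ s, c x • x

/-- The simple roots: the roots lying on the extremal rays of the cone generated by the
positive roots. -/
def IsSimpleRoot (β : V) : Prop :=
  β ∈ R.PosRoots ∧
    ∀ x y : V, R.InPosCone x → R.InPosCone y → β = x + y → ∃ a : ℝ, 0 ≤ a ∧ x = a • β

/-- The inversion set `inv(w) = Φ⁺ ∩ w(Φ⁻)` of `w`: the positive roots sent to negative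
roots by `w⁻¹`. -/
def invSet (w : V ≃ₗᵢ[ℝ] V) : Set V :=
  {β ∈ R.PosRoots | w.symm β ∈ R.NegRoots}

/-- The length of `w`: the smallest number of simple reflections needed to write `w`. -/
noncomputable def len (w : V ≃ₗᵢ[ℝ] V) : ℕ :=
  sInf {n | ∃ L : List V, L.length = n ∧ (∀ β ∈ L, R.IsSimpleRoot β) ∧
    (L.map reflAlong).prod = w}

end FiniteRootSystem

section SubwordComplex

open FiniteRootSystem

variable {V : Type*} [NormedAddCommGroup V] [InnerProductSpace ℝ V] [FiniteDimensional ℝ V]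

/-- The product of the reflections of the letters of the word `Q` at the positions in `X`,
taken in increasing order of positions. -/
noncomputable def prodQ {m : ℕ} (Q : Fin m → V) (X : Finset (Fin m)) : V ≃ₗᵢ[ℝ] V :=
  ((X.sort (· ≤ ·)).map (fun k => reflAlong (Q k))).prod

/-- A facet of the subword complex `SC(Q, ρ)`: a set of positions whose complement forms
a reduced expression for `ρ` as a subword of `Q`.  Here the word `Q` is recorded by the
simple roots of its letters, the corresponding simple reflections being `reflAlong (Q k)`. -/
def IsSCFacet (R : FiniteRootSystem V) {m : ℕ} (Q : Fin m → V) (ρ : V ≃ₗᵢ[ℝ] V)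
    (I : Finset (Fin m)) : Prop :=
  prodQ Q Iᶜ = ρ ∧ Iᶜ.card = R.len ρ

/-- The root function of a facet `I`: `r(I, k) = Π Q_{[k−1]∖I} (α_{q_k})`. -/
noncomputable def rootf {m : ℕ} (Q : Fin m → V) (I : Finset (Fin m)) (k : Fin m) : V :=
  prodQ Q (Finset.univ.filter (fun x => x < k ∧ x ∉ I)) (Q k)

end SubwordComplex


/-! Let `C` be the complement of `I ∖ {i} = J ∖ {j}`, so that `Iᶜ = C ∖ {i}` and `Jᶜ = C ∖ {j}`.
Deleting a letter `p` from a word multiplies every prefix product reaching past `p` on the left by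
the reflection in the root at `p` (the letter's reflection conjugated by the preceding prefix).
Hence `w_k(I) = [i < k] s_{r(I,i)} w_k(C)` and `w_k(J) = [j < k] s_{r(J,j)} w_k(C)`. Since both
complements multiply to `ρ`, comparing full products gives `s_{r(I,i)} = s_{r(J,j)}`, and the two
factors cancel exactly when `k` lies on the same side of `i` and of `j`. -/
lemma Finset.sort_union_of_forall_lt {α : Type*} [LinearOrder α] {X Y : Finset α}
    (h : ∀ x ∈ X, ∀ y ∈ Y, x < y) :
    (X ∪ Y).sort (· ≤ ·) = X.sort (· ≤ ·) ++ Y.sort (· ≤ ·) := by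
  classical
  have hl : (X.sort (· ≤ ·) ++ Y.sort (· ≤ ·)).toFinset = X ∪ Y := by ext; simp
  have hnodup : (X.sort (· ≤ ·) ++ Y.sort (· ≤ ·)).Nodup :=
    (X.sort_nodup _).append (Y.sort_nodup _) fun x hx hy =>
      lt_irrefl x (h x ((X.mem_sort _).1 hx) x ((Y.mem_sort _).1 hy))
  rw [← hl, List.toFinset_sort _ hnodup, List.pairwise_append]
  exact ⟨X.pairwise_sort _, Y.pairwise_sort _, fun x hx y hy =>
    (h x ((X.mem_sort _).1 hx) y ((Y.mem_sort _).1 hy)).le⟩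

lemma ite_lt_mul_ite_lt {α M : Type*} [LinearOrder α] [Monoid M] {s : M} (hs : s * s = 1)
    (i j k : α) :
    ((if j < k then s else 1) * if i < k then s else 1) =
      if min i j < k ∧ k ≤ max i j then s else 1 := by
  rcases le_total i j with h | h <;> simp only [min_eq_left, min_eq_right, max_eq_left,
    max_eq_right, h] <;> split_ifs <;> first | (exfalso; order) | simp_all

section Reflections

variable {V : Type*} [NormedAddCommGroup V] [InnerProductSpace ℝ V]

lemma reflAlong_mul_self (v : V) : reflAlong v * reflAlong v = 1 :=
  Submodule.reflection_mul_reflection _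

lemma reflAlong_map (g : V ≃ₗᵢ[ℝ] V) (v : V) :
    reflAlong (g v) = g * reflAlong v * g⁻¹ := by
  have hspan : Submodule.span ℝ {g v} =
      (Submodule.span ℝ {v}).map (g.toLinearEquiv : V →ₗ[ℝ] V) := by
    rw [Submodule.map_span]; simp
  unfold reflAlong
  simp only [hspan, ← Submodule.map_orthogonal_equiv, Submodule.reflection_map]
  rfl

end Reflections

section PrefixProducts

variable {V : Type*} [NormedAddCommGroup V] [InnerProductSpace ℝ V]
  {m : ℕ} (Q : Fin m → V)

lemma prodQ_union_of_forall_lt {X Y : Finset (Fin m)} (h : ∀ x ∈ X, ∀ y ∈ Y, x < y) :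
    prodQ Q (X ∪ Y) = prodQ Q X * prodQ Q Y := by
  rw [prodQ, Finset.sort_union_of_forall_lt h, List.map_append, List.prod_append, prodQ, prodQ]

lemma prodQ_singleton (p : Fin m) : prodQ Q {p} = reflAlong (Q p) := by
  simp [prodQ]

lemma prodQ_erase {S : Finset (Fin m)} {p : Fin m} (hp : p ∈ S) :
    prodQ Q (S.erase p) = reflAlong (prodQ Q (S.filter (· < p)) (Q p)) * prodQ Q S := by
  have hS : S = S.filter (· < p) ∪ ({p} ∪ S.filter (p < ·)) := by
    ext x; simp only [Finset.mem_union, Finset.mem_filter, Finset.mem_singleton]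
    grind
  have hSe : S.erase p = S.filter (· < p) ∪ S.filter (p < ·) := by
    ext x; simp only [Finset.mem_erase, Finset.mem_union, Finset.mem_filter]
    grind
  have hsplit : prodQ Q S =
      prodQ Q (S.filter (· < p)) * (reflAlong (Q p) * prodQ Q (S.filter (p < ·))) := by
    conv_lhs => rw [hS]
    rw [prodQ_union_of_forall_lt, prodQ_union_of_forall_lt, prodQ_singleton]
    · simp
    · simp only [Finset.mem_union, Finset.mem_filter, Finset.mem_singleton]
      rintro x hx y (rfl | hy) <;> order
  rw [hSe, prodQ_union_of_forall_lt, hsplit, reflAlong_map, mul_assoc, inv_mul_cancel_left,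
    mul_assoc, ← mul_assoc (reflAlong (Q p)), reflAlong_mul_self, one_mul]
  simp only [Finset.mem_filter]
  intro x hx y hy; order

end PrefixProducts

lemma Finset.compl_eq_erase_compl_erase {α : Type*} [Fintype α] [DecidableEq α] {s : Finset α}
    {a : α} (ha : a ∈ s) : sᶜ = (s.erase a)ᶜ.erase a := by
  rw [Finset.compl_erase, Finset.erase_insert (Finset.notMem_compl.2 ha)]

section RootFunction

variable {V : Type*} [NormedAddCommGroup V] [InnerProductSpace ℝ V] {m : ℕ} (Q : Fin m → V)
  {I J : Finset (Fin m)} {i j : Fin m}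

/-- The prefix product `w_k(I) = Π Q_{[k−1]∖I}` of the paper. -/
noncomputable def prefixQ (I : Finset (Fin m)) (k : Fin m) : V ≃ₗᵢ[ℝ] V :=
  prodQ Q (Iᶜ.filter (· < k))

lemma rootf_eq_prefixQ_apply (I : Finset (Fin m)) (k : Fin m) :
    rootf Q I k = prefixQ Q I k (Q k) := by
  have hset : Finset.univ.filter (fun x => x < k ∧ x ∉ I) = Iᶜ.filter (· < k) := by
    ext x
    simp [and_comm]
  rw [rootf, prefixQ, hset]

lemma rootf_erase_self (I : Finset (Fin m)) (i : Fin m) : rootf Q (I.erase i) i = rootf Q I i := by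
  simp only [rootf]
  congr 3
  ext x
  simp only [Finset.mem_erase]
  grind

lemma prodQ_compl_of_mem (hi : i ∈ I) :
    prodQ Q Iᶜ = reflAlong (rootf Q I i) * prodQ Q (I.erase i)ᶜ := by
  rw [Finset.compl_eq_erase_compl_erase hi, prodQ_erase Q (by simp), ← rootf_erase_self,
    rootf_eq_prefixQ_apply, prefixQ]

lemma prefixQ_of_mem (hi : i ∈ I) (k : Fin m) :
    prefixQ Q I k = (if i < k then reflAlong (rootf Q I i) else 1) * prefixQ Q (I.erase i) k := by
  rw [prefixQ, prefixQ, Finset.compl_eq_erase_compl_erase hi, Finset.filter_erase]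
  split_ifs with hik
  · rw [prodQ_erase Q (by simpa using hik), Finset.filter_filter, ← rootf_erase_self,
      rootf_eq_prefixQ_apply, prefixQ]
    congr 4
    ext x
    simp only [Finset.mem_filter]
    grind
  · rw [Finset.erase_eq_of_notMem (by simp [hik]), one_mul]

lemma reflAlong_rootf_eq_of_flip (hIJ : prodQ Q Iᶜ = prodQ Q Jᶜ) (hi : i ∈ I) (hj : j ∈ J)
    (hij : I.erase i = J.erase j) :
    reflAlong (rootf Q J j) = reflAlong (rootf Q I i) := by
  have hI := prodQ_compl_of_mem Q hi
  have hJ := prodQ_compl_of_mem Q hj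
  rw [hij, hIJ, hJ] at hI
  exact mul_right_cancel hI

lemma prefixQ_eq_of_flip (hIJ : prodQ Q Iᶜ = prodQ Q Jᶜ) (hi : i ∈ I) (hj : j ∈ J)
    (hij : I.erase i = J.erase j) (k : Fin m) :
    prefixQ Q J k =
      (if min i j < k ∧ k ≤ max i j then reflAlong (rootf Q I i) else 1) * prefixQ Q I k := by
  have hs := reflAlong_mul_self (rootf Q I i)
  have hii : ((if i < k then reflAlong (rootf Q I i) else 1) *
      if i < k then reflAlong (rootf Q I i) else 1) = 1 := by
    split_ifs <;> simp [hs]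
  rw [← ite_lt_mul_ite_lt hs, prefixQ_of_mem Q hj, ← hij,
    reflAlong_rootf_eq_of_flip Q hIJ hi hj hij, prefixQ_of_mem Q hi, mul_assoc (ite (j < k) _ 1),
    ← mul_assoc (ite (i < k) _ 1), hii, one_mul]

end RootFunction

open FiniteRootSystem in
theorem rootf_update_general
    {V : Type*} [NormedAddCommGroup V] [InnerProductSpace ℝ V] [FiniteDimensional ℝ V]
    (R : FiniteRootSystem V) {m : ℕ} (Q : Fin m → V)
    (ρ : V ≃ₗᵢ[ℝ] V)
    (I J : Finset (Fin m)) (hI : IsSCFacet R Q ρ I) (hJ : IsSCFacet R Q ρ J)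
    (i j : Fin m) (hi : i ∈ I) (hj : j ∈ J) (hij : I.erase i = J.erase j) :
    ∀ k : Fin m,
      (min i j < k ∧ k ≤ max i j → rootf Q J k = reflAlong (rootf Q I i) (rootf Q I k)) ∧
      (¬(min i j < k ∧ k ≤ max i j) → rootf Q J k = rootf Q I k) := by
  intro k
  have hk : rootf Q J k =
      (if min i j < k ∧ k ≤ max i j then reflAlong (rootf Q I i) else 1) (rootf Q I k) := by
    rw [rootf_eq_prefixQ_apply, prefixQ_eq_of_flip Q (hI.1.trans hJ.1.symm) hi hj hij,
      rootf_eq_prefixQ_apply Q I k]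
    rfl
  exact ⟨fun h => by rw [hk, if_pos h], fun h => by rw [hk, if_neg h]; rfl⟩

open FiniteRootSystem in
/-- Updating the root function along a flip: if `I∖{i} = J∖{j}` are adjacent facets, then
`r(J,k) = s_{r(I,i)}(r(I,k))` for `min(i,j) < k ≤ max(i,j)`, and `r(J,k) = r(I,k)`
otherwise. -/
theorem rootf_update
    {V : Type*} [NormedAddCommGroup V] [InnerProductSpace ℝ V] [FiniteDimensional ℝ V]
    (R : FiniteRootSystem V) {m : ℕ} (Q : Fin m → V) (hQ : ∀ k, R.IsSimpleRoot (Q k))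
    (ρ : V ≃ₗᵢ[ℝ] V) (hρ : ρ ∈ R.W)
    (I J : Finset (Fin m)) (hI : IsSCFacet R Q ρ I) (hJ : IsSCFacet R Q ρ J)
    (i j : Fin m) (hi : i ∈ I) (hj : j ∈ J) (hij : I.erase i = J.erase j) (hne : I ≠ J) :
    ∀ k : Fin m,
      (min i j < k ∧ k ≤ max i j → rootf Q J k = reflAlong (rootf Q I i) (rootf Q I k)) ∧
      (¬(min i j < k ∧ k ≤ max i j) → rootf Q J k = rootf Q I k) :=
  rootf_update_general R Q ρ I J hI hJ i j hi hj hij
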